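/- Let U be a nonempty open subset of ℝ^d and let (x_n)_{n≥1} be a sequence of points in ℝ^d. Assume that for Lebesgue-almost every x ∈ U there exist α > 0 and an integer J ≥ 0 such that #M((x_n)_{n≥1}; λ_{j₀}(x), j) ≥ α·2^{dj} for all integers j₀, j ≥ J, where λ_{j₀}(x) denotes the unique dyadic cube of generation j₀ containing x. Then the sequence (x_n)_{n≥1} is uniformly eutaxic in U. -/

import Mathlib

open MeasureTheory Filter Set
open scoped Topology ENNReal

noncomputable section

/-- The collection `P_d` of nonincreasing positive sequences converging to `0` whose
`d`-th powers have divergent sum. -/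
def Pd (d : ℕ) : Set (ℕ → ℝ) :=
  {r | (∀ n, 0 < r n) ∧ (∀ n, r (n + 1) ≤ r n) ∧ Tendsto r atTop (𝓝 0) ∧
    ¬ Summable fun n => r n ^ d}

/-- A sequence of points of `ℝ^d` is eutaxic in an open set `U` with respect to a sequence
of radii `r` if Lebesgue-almost every `y ∈ U` satisfies `|y - x_n| < r_n` for infinitely
many `n ≥ 1`. -/
def Eutaxic {d : ℕ} (x : ℕ → Fin d → ℝ) (U : Set (Fin d → ℝ)) (r : ℕ → ℝ) : Prop :=
  ∀ᵐ y ∂(volume.restrict U), {n : ℕ | 1 ≤ n ∧ ‖y - x n‖ < r n}.Infinite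

/-- A sequence is uniformly eutaxic in `U` if it is eutaxic in `U` with respect to every
sequence in `P_d`. -/
def UnifEutaxic {d : ℕ} (x : ℕ → Fin d → ℝ) (U : Set (Fin d → ℝ)) : Prop :=
  ∀ r ∈ Pd d, Eutaxic x U r

/-- The dyadic cube `2^{-j}(k + [0,1)^d)` of `ℝ^d`. -/
def dyadicCube (d : ℕ) (j : ℤ) (k : Fin d → ℤ) : Set (Fin d → ℝ) :=
  {x | ∀ i, (k i : ℝ) * 2 ^ (-j) ≤ x i ∧ x i < ((k i : ℝ) + 1) * 2 ^ (-j)}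

/-- The family `M((x_n); λ, m)` (indexed by the integer points `k'` parametrizing the
cubes): the dyadic subcubes of `λ = dyadicCube d j k` with generation `j + m` containing a
point `x_n` for some `1 ≤ n ≤ 2^{d(j+m)}`. -/
def MSet {d : ℕ} (x : ℕ → Fin d → ℝ) (j : ℤ) (k : Fin d → ℤ) (m : ℕ) :
    Set (Fin d → ℤ) :=
  {k' | dyadicCube d (j + m) k' ⊆ dyadicCube d j k ∧
    ∃ n : ℕ, 1 ≤ n ∧ (n : ℝ) ≤ (2 : ℝ) ^ ((d : ℤ) * (j + m)) ∧
      x n ∈ dyadicCube d (j + m) k'}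

/-- The integer point parametrizing the unique dyadic cube of generation `j`
containing `y`. -/
def cubeIdx {d : ℕ} (j : ℤ) (y : Fin d → ℝ) : Fin d → ℤ :=
  fun i => ⌊y i * 2 ^ j⌋

open scoped NNReal

namespace Stmt12

variable {d : ℕ}

theorem two_zpow_pos (j : ℤ) : (0:ℝ) < 2 ^ j := zpow_pos (by norm_num) j

theorem cube_mem_iff {j : ℤ} {k : ℤ} {a : ℝ} :
    ((k:ℝ) * 2 ^ (-j) ≤ a ∧ a < ((k:ℝ) + 1) * 2 ^ (-j)) ↔ k = ⌊a * 2 ^ j⌋ := by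
  have h2 : (0:ℝ) < 2 ^ j := two_zpow_pos j
  rw [zpow_neg, ← div_eq_mul_inv, ← div_eq_mul_inv, div_le_iff₀ h2, lt_div_iff₀ h2,
    eq_comm, Int.floor_eq_iff]

theorem mem_dyadicCube {j : ℤ} {k : Fin d → ℤ} {y : Fin d → ℝ} :
    y ∈ dyadicCube d j k ↔ ∀ i, k i = ⌊y i * 2 ^ j⌋ :=
  forall_congr' fun _ => cube_mem_iff

theorem mem_dyadicCube_iff_cubeIdx {j : ℤ} {k : Fin d → ℤ} {y : Fin d → ℝ} :
    y ∈ dyadicCube d j k ↔ k = cubeIdx j y := by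
  rw [mem_dyadicCube, funext_iff]; rfl

theorem self_mem_dyadicCube (j : ℤ) (y : Fin d → ℝ) :
    y ∈ dyadicCube d j (cubeIdx j y) := mem_dyadicCube_iff_cubeIdx.2 rfl

theorem dyadicCube_disjoint {j : ℤ} {k k' : Fin d → ℤ} (h : k ≠ k') :
    dyadicCube d j k ∩ dyadicCube d j k' = ∅ := by
  ext y
  simp only [Set.mem_inter_iff, Set.mem_empty_iff_false, iff_false]
  rintro ⟨h1, h2⟩
  rw [mem_dyadicCube_iff_cubeIdx] at h1 h2
  exact h (h1.trans h2.symm)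

theorem dyadicCube_eq_pi (j : ℤ) (k : Fin d → ℤ) :
    dyadicCube d j k =
      Set.pi Set.univ (fun i => Set.Ico ((k i : ℝ) * 2 ^ (-j)) (((k i : ℝ) + 1) * 2 ^ (-j))) := by
  ext y; simp [dyadicCube, Set.mem_pi, Set.mem_Ico]

theorem volume_dyadicCube (j : ℤ) (k : Fin d → ℤ) :
    volume (dyadicCube d j k) = ENNReal.ofReal (((2:ℝ) ^ (-j)) ^ d) := by
  rw [dyadicCube_eq_pi, volume_pi_pi]
  have : ∀ i : Fin d, volume (Set.Ico ((k i : ℝ) * 2 ^ (-j)) (((k i : ℝ) + 1) * 2 ^ (-j)))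
      = ENNReal.ofReal ((2:ℝ) ^ (-j)) := by
    intro i
    rw [Real.volume_Ico]
    congr 1
    ring
  simp only [this]
  rw [Finset.prod_const, Finset.card_univ, Fintype.card_fin,
    ← ENNReal.ofReal_pow (le_of_lt (two_zpow_pos _))]

theorem dyadicCube_subset_ball {j : ℤ} {k : Fin d → ℤ} {z : Fin d → ℝ}
    (hd : 1 ≤ d) (hz : z ∈ dyadicCube d j k) :
    dyadicCube d j k ⊆ Metric.ball z ((2:ℝ) ^ (-j)) := by
  intro y hy
  rw [Metric.mem_ball, dist_pi_lt_iff (two_zpow_pos _)]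
  intro i
  have h1 := hy i
  have h2 := hz i
  have he : ((k i:ℝ) + 1) * 2 ^ (-j) = (k i:ℝ) * 2 ^ (-j) + 2 ^ (-j) := by ring
  rw [Real.dist_eq, abs_sub_lt_iff]
  constructor <;> linarith [h1.1, h1.2, h2.1, h2.2, he.le, he.ge]

theorem floor_double_ge (u : ℝ) : 2 * ⌊u⌋ ≤ ⌊2 * u⌋ := by
  rw [Int.le_floor]
  push_cast
  linarith [Int.floor_le u]

theorem floor_double_le (u : ℝ) : ⌊2 * u⌋ ≤ 2 * ⌊u⌋ + 1 := by
  have : ⌊2 * u⌋ < 2 * ⌊u⌋ + 2 := by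
    rw [Int.floor_lt]
    push_cast
    linarith [Int.lt_floor_add_one u]
  omega

theorem cubeIdx_succ_cube_subset (j : ℤ) (z : Fin d → ℝ) :
    dyadicCube d (j+1) (cubeIdx (j+1) z) ⊆ dyadicCube d j (cubeIdx j z) := by
  intro y hy i
  have hy' := hy i
  have hpow : (2:ℝ) ^ (-(j+1)) * 2 = 2 ^ (-j) := by
    rw [← zpow_add_one₀ (by norm_num : (2:ℝ) ≠ 0)]
    congr 1; ring
  have hidx : cubeIdx (j+1) z i = ⌊2 * (z i * 2 ^ j)⌋ := by
    unfold cubeIdx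
    congr 1
    rw [zpow_add_one₀ (by norm_num : (2:ℝ) ≠ 0)]
    ring
  have hge := floor_double_ge (z i * 2 ^ j)
  have hle := floor_double_le (z i * 2 ^ j)
  rw [hidx] at hy'
  have hk : cubeIdx j z i = ⌊z i * 2 ^ j⌋ := rfl
  rw [hk]
  have hpos : (0:ℝ) < 2 ^ (-(j+1)) := two_zpow_pos _
  constructor
  · calc (⌊z i * 2 ^ j⌋ : ℝ) * 2 ^ (-j) = (2 * ⌊z i * 2 ^ j⌋ : ℝ) * 2 ^ (-(j+1)) := by
          rw [← hpow]; push_cast; ring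
    _ ≤ (⌊2 * (z i * 2 ^ j)⌋ : ℝ) * 2 ^ (-(j+1)) := by
          have : ((2 * ⌊z i * 2 ^ j⌋ : ℤ) : ℝ) ≤ ((⌊2 * (z i * 2 ^ j)⌋ : ℤ) : ℝ) := by
            exact_mod_cast hge
          push_cast at this ⊢
          nlinarith [hpos]
    _ ≤ y i := hy'.1
  · calc y i < ((⌊2 * (z i * 2 ^ j)⌋ : ℝ) + 1) * 2 ^ (-(j+1)) := hy'.2
    _ ≤ ((2 * ⌊z i * 2 ^ j⌋ : ℝ) + 2) * 2 ^ (-(j+1)) := by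
          have : ((⌊2 * (z i * 2 ^ j)⌋ : ℤ) : ℝ) ≤ ((2 * ⌊z i * 2 ^ j⌋ + 1 : ℤ) : ℝ) := by
            exact_mod_cast hle
          push_cast at this ⊢
          nlinarith [hpos]
    _ = ((⌊z i * 2 ^ j⌋:ℝ) + 1) * 2 ^ (-j) := by
          rw [← hpow]; push_cast; ring

theorem cubeIdx_cube_mono {g g' : ℕ} (h : g ≤ g') (z : Fin d → ℝ) :
    dyadicCube d (g':ℤ) (cubeIdx (g':ℤ) z) ⊆ dyadicCube d (g:ℤ) (cubeIdx (g:ℤ) z) := by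
  induction g', h using Nat.le_induction with
  | base => exact subset_rfl
  | succ n hn ih =>
      refine subset_trans ?_ ih
      have : ((n:ℤ) + 1) = ((n+1 : ℕ) : ℤ) := by push_cast; ring
      rw [← this]
      exact cubeIdx_succ_cube_subset (n:ℤ) z


theorem toNat_cast_le {c : ℤ} {b : ℝ} (hb : 0 ≤ b) (h : (c:ℝ) ≤ b) :
    ((c.toNat : ℕ) : ℝ) ≤ b := by
  rcases le_or_gt c 0 with hc | hc
  · rw [Int.toNat_of_nonpos hc]; exact_mod_cast hb
  · have h0 : (c.toNat : ℤ) = c := Int.toNat_of_nonneg hc.le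
    have h1 : ((c.toNat : ℕ) : ℝ) = (c : ℝ) := by exact_mod_cast congrArg (Int.cast : ℤ → ℝ) h0
    rw [h1]; exact h

theorem card_Icc_le (lo hi : Fin d → ℤ) {B : ℝ} (hB : 0 ≤ B)
    (h : ∀ i, ((hi i : ℝ) - lo i + 1) ≤ B) :
    ((Finset.Icc lo hi).card : ℝ) ≤ B ^ d := by
  rw [Pi.card_Icc]
  push_cast
  calc (∏ i, ((Finset.Icc (lo i) (hi i)).card : ℝ))
      ≤ ∏ _i : Fin d, B := by
        refine Finset.prod_le_prod (fun i _ => by positivity) (fun i _ => ?_)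
        rw [Int.card_Icc]
        refine toNat_cast_le hB ?_
        push_cast
        linarith [h i]
    _ = B ^ d := by rw [Finset.prod_const, Finset.card_univ, Fintype.card_fin]

theorem meet_ball_subset_Icc (m : ℕ) (ξ : Fin d → ℝ) {ρ : ℝ} :
    {k : Fin d → ℤ | (dyadicCube d (m:ℤ) k ∩ Metric.ball ξ ρ).Nonempty} ⊆
      ↑(Finset.Icc (fun i => ⌊(ξ i - ρ) * 2^(m:ℤ)⌋) (fun i => ⌊(ξ i + ρ) * 2^(m:ℤ)⌋)) := by
  rintro k ⟨z, hzc, hzb⟩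
  rw [Finset.coe_Icc, Set.mem_Icc]
  have hz := mem_dyadicCube.1 hzc
  have hpos : (0:ℝ) ≤ 2 ^ (m:ℤ) := (two_zpow_pos _).le
  constructor <;> intro i <;> rw [hz i]
  · refine Int.floor_le_floor ?_
    have := dist_le_pi_dist z ξ i
    rw [Metric.mem_ball, Real.dist_eq] at *
    have h1 : |z i - ξ i| < ρ := lt_of_le_of_lt (by exact_mod_cast dist_le_pi_dist z ξ i) hzb
    have := abs_lt.1 h1
    nlinarith [this.1, this.2]
  · refine Int.floor_le_floor ?_
    have h1 : |z i - ξ i| < ρ := lt_of_le_of_lt (by exact_mod_cast dist_le_pi_dist z ξ i) hzb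
    have := abs_lt.1 h1
    nlinarith [this.1, this.2]

theorem card_meet_ball_le (m : ℕ) (ξ : Fin d → ℝ) {ρ : ℝ} (hρ : 0 ≤ ρ) :
    ∃ t : Finset (Fin d → ℤ),
      {k : Fin d → ℤ | (dyadicCube d (m:ℤ) k ∩ Metric.ball ξ ρ).Nonempty} ⊆ ↑t ∧
      (t.card : ℝ) ≤ (2 * ρ * 2^(m:ℤ) + 2) ^ d := by
  refine ⟨_, meet_ball_subset_Icc m ξ, card_Icc_le _ _ (by positivity) fun i => ?_⟩
  have h1 := Int.floor_le ((ξ i + ρ) * 2^(m:ℤ))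
  have h2 := Int.sub_one_lt_floor ((ξ i - ρ) * 2^(m:ℤ))
  have hpos : (0:ℝ) ≤ 2 ^ (m:ℤ) := (two_zpow_pos _).le
  nlinarith

theorem pow_bound {u : ℝ} (hu : 0 ≤ u) (d : ℕ) :
    (2*u+2)^d ≤ 4^d * (u^d + 1) := by
  rcases le_total u 1 with h | h
  · calc (2*u+2)^d ≤ 4^d := by
          refine pow_le_pow_left₀ (by linarith) (by linarith) d
    _ ≤ 4^d * (u^d+1) := by nlinarith [pow_nonneg hu d, pow_pos (show (0:ℝ) < 4 by norm_num) d]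
  · calc (2*u+2)^d ≤ (4*u)^d := by
          refine pow_le_pow_left₀ (by linarith) (by linarith) d
    _ = 4^d * u^d := by rw [mul_pow]
    _ ≤ 4^d * (u^d+1) := by nlinarith [pow_pos (show (0:ℝ) < 4 by norm_num) d]

theorem volume_piece_ge {m : ℕ} {k : Fin d → ℤ} {ξ : Fin d → ℝ} {ρ : ℝ}
    (hξ : ξ ∈ dyadicCube d (m:ℤ) k) (hρ0 : 0 < ρ) (hρ : ρ ≤ ((2:ℝ)^(-(m:ℤ)))/2) :
    ENNReal.ofReal (ρ^d) ≤ volume (Metric.ball ξ ρ ∩ dyadicCube d (m:ℤ) k) := by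
  set ℓ : ℝ := (2:ℝ)^(-(m:ℤ)) with hℓ
  set c : Fin d → ℝ := fun i => min (ξ i) (((k i:ℝ)+1) * ℓ - ρ) with hc
  have hsub : Set.pi Set.univ (fun i => Set.Ico (c i) (c i + ρ)) ⊆
      Metric.ball ξ ρ ∩ dyadicCube d (m:ℤ) k := by
    intro z hz
    have hzi : ∀ i, c i ≤ z i ∧ z i < c i + ρ := by
      intro i
      have := hz i (Set.mem_univ i)
      rwa [Set.mem_Ico] at this
    have he : ∀ i, ((k i:ℝ)+1) * ℓ = (k i:ℝ) * ℓ + ℓ := fun i => by ring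
    constructor
    · rw [Metric.mem_ball, dist_pi_lt_iff hρ0]
      intro i
      rw [Real.dist_eq, abs_sub_lt_iff]
      have h1 := (hξ i).1
      have h2 := (hξ i).2
      have h3 := hzi i
      have hcle : c i ≤ ξ i := min_le_left _ _
      have hcgt : ξ i - ρ < c i := by
        rw [hc]
        simp only [lt_min_iff]
        exact ⟨by linarith, by linarith⟩
      constructor <;> linarith
    · intro i
      have h1 := (hξ i).1
      have h2 := (hξ i).2
      have h3 := hzi i
      have hca : (k i:ℝ) * ℓ ≤ c i := by
        rw [hc]
        simp only [le_min_iff]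
        exact ⟨h1, by linarith [he i]⟩
      have hcb : c i + ρ ≤ ((k i:ℝ)+1) * ℓ := by
        have : c i ≤ ((k i:ℝ)+1) * ℓ - ρ := min_le_right _ _
        linarith
      exact ⟨by linarith, by linarith⟩
  calc ENNReal.ofReal (ρ^d) = volume (Set.pi Set.univ (fun i => Set.Ico (c i) (c i + ρ))) := by
        rw [volume_pi_pi]
        simp only [Real.volume_Ico, add_sub_cancel_left]
        rw [Finset.prod_const, Finset.card_univ, Fintype.card_fin,
          ← ENNReal.ofReal_pow hρ0.le]
  _ ≤ _ := measure_mono hsub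


section Diverge
variable (d : ℕ) (r : ℕ → ℝ)

def sfun (m : ℕ) : ℝ := r (2^(d*m))
def rhofun (m : ℕ) : ℝ := min (sfun d r m) (((2:ℝ)^(m+1))⁻¹)
def taufun (m : ℕ) : ℝ := ((2:ℝ)^m * rhofun d r m)^d

variable {d r}

theorem antitone_of_succ (hmono : ∀ n, r (n+1) ≤ r n) : Antitone r :=
  antitone_nat_of_succ_le hmono

theorem rho_pos (r : ℕ → ℝ) (hpos : ∀ n, 0 < r n) (m : ℕ) : 0 < rhofun d r m := by
  unfold rhofun sfun
  exact lt_min (hpos _) (by positivity)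

theorem rho_le (r : ℕ → ℝ) (m : ℕ) : rhofun d r m ≤ ((2:ℝ)^(m+1))⁻¹ := min_le_right _ _

theorem rho_le_s (r : ℕ → ℝ) (m : ℕ) : rhofun d r m ≤ sfun d r m := min_le_left _ _

theorem tau_nonneg (hpos : ∀ n, 0 < r n) (m : ℕ) : 0 ≤ taufun d r m := by
  unfold taufun
  have h := (rho_pos (d := d) r hpos m).le
  positivity

theorem bucket_bound (hpos : ∀ n, 0 < r n) (hmono : ∀ n, r (n+1) ≤ r n) (T : ℕ) :
    ∑ n ∈ Finset.Ico (2^(d*T)) (2^(d*(T+1))), r n ^ d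
      ≤ 2^d * ((2:ℝ)^T * sfun d r T)^d := by
  have hr : Antitone r := antitone_of_succ hmono
  have hterm : ∀ n ∈ Finset.Ico (2^(d*T)) (2^(d*(T+1))), r n ^ d ≤ sfun d r T ^ d := by
    intro n hn
    rw [Finset.mem_Ico] at hn
    exact pow_le_pow_left₀ (hpos n).le (hr hn.1) d
  calc ∑ n ∈ Finset.Ico (2^(d*T)) (2^(d*(T+1))), r n ^ d
      ≤ (Finset.Ico (2^(d*T)) (2^(d*(T+1)))).card • (sfun d r T ^ d) :=
        Finset.sum_le_card_nsmul _ _ _ hterm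
    _ = ((Finset.Ico (2^(d*T)) (2^(d*(T+1)))).card : ℝ) * sfun d r T ^ d := by
        rw [nsmul_eq_mul]
    _ ≤ (2:ℝ)^(d*(T+1)) * sfun d r T ^ d := by
        have h1 : ((Finset.Ico (2^(d*T)) (2^(d*(T+1)))).card : ℝ) ≤ (2:ℝ)^(d*(T+1)) := by
          rw [Nat.card_Ico]
          calc ((2^(d*(T+1)) - 2^(d*T) : ℕ) : ℝ) ≤ ((2^(d*(T+1)) : ℕ) : ℝ) := by
                exact_mod_cast Nat.sub_le _ _
          _ = (2:ℝ)^(d*(T+1)) := by push_cast; ring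
        have h2 : (0:ℝ) ≤ sfun d r T ^ d := by
          have := (hpos (2^(d*T))).le
          unfold sfun; positivity
        nlinarith
    _ = 2^d * ((2:ℝ)^T * sfun d r T)^d := by
        rw [mul_pow, ← pow_mul]
        ring_nf

theorem sum_buckets (hpos : ∀ n, 0 < r n) (hmono : ∀ n, r (n+1) ≤ r n)
    (m₂ : ℕ) : ∀ T, m₂ ≤ T →
    ∑ n ∈ Finset.Ico (2^(d*m₂)) (2^(d*T)), r n ^ d
      ≤ ∑ m ∈ Finset.Ico m₂ T, 2^d * ((2:ℝ)^m * sfun d r m)^d := by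
  intro T hT
  induction T, hT using Nat.le_induction with
  | base => simp
  | succ T hT ih =>
      have hle1 : (2:ℕ)^(d*m₂) ≤ 2^(d*T) := Nat.pow_le_pow_right (by norm_num) (Nat.mul_le_mul_left d hT)
      have hle2 : (2:ℕ)^(d*T) ≤ 2^(d*(T+1)) := Nat.pow_le_pow_right (by norm_num) (Nat.mul_le_mul_left d (by omega))
      rw [← Finset.sum_Ico_consecutive _ hle1 hle2,
        ← Finset.sum_Ico_consecutive _ hT (by omega : T ≤ T+1)]
      have := bucket_bound (d := d) hpos hmono T
      have h3 : ∑ m ∈ Finset.Ico T (T+1), 2^d * ((2:ℝ)^m * sfun d r m)^d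
          = 2^d * ((2:ℝ)^T * sfun d r T)^d := by
        rw [Finset.sum_Ico_eq_sum_range]
        simp
      linarith

theorem sum_s_unbounded (hd : 1 ≤ d) (hpos : ∀ n, 0 < r n) (hmono : ∀ n, r (n+1) ≤ r n)
    (hdiv : ¬ Summable fun n => r n ^ d) (C : ℝ) (m₂ : ℕ) :
    ∃ T, m₂ ≤ T ∧ C ≤ ∑ m ∈ Finset.Ico m₂ T, ((2:ℝ)^m * sfun d r m)^d := by
  have hnn : ∀ n, 0 ≤ r n ^ d := fun n => pow_nonneg (hpos n).le d
  have htends : Tendsto (fun n => ∑ i ∈ Finset.range n, r i ^ d) atTop atTop :=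
    (not_summable_iff_tendsto_nat_atTop_of_nonneg hnn).1 hdiv
  have hTle : ∀ T : ℕ, T ≤ 2^(d*T) := by
    intro T
    calc T ≤ 2^T := (Nat.lt_two_pow_self (n := T)).le
    _ ≤ 2^(d*T) := Nat.pow_le_pow_right (by norm_num) (Nat.le_mul_of_pos_left T (by omega))
  have h2 : Tendsto (fun T : ℕ => (2:ℕ)^(d*T)) atTop atTop :=
    tendsto_atTop_mono hTle tendsto_id
  have h3 : Tendsto (fun T : ℕ => ∑ i ∈ Finset.range (2^(d*T)), r i ^ d) atTop atTop :=
    htends.comp h2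
  obtain ⟨T, hT⟩ := ((h3.eventually_ge_atTop
      ((2^d : ℝ) * C + ∑ i ∈ Finset.range (2^(d*m₂)), r i ^ d)).and
      (eventually_ge_atTop m₂)).exists
  refine ⟨T, hT.2, ?_⟩
  have hle1 : (2:ℕ)^(d*m₂) ≤ 2^(d*T) :=
    Nat.pow_le_pow_right (by norm_num) (Nat.mul_le_mul_left d hT.2)
  have hsub : ∑ n ∈ Finset.Ico (2^(d*m₂)) (2^(d*T)), r n ^ d
      = ∑ i ∈ Finset.range (2^(d*T)), r i ^ d - ∑ i ∈ Finset.range (2^(d*m₂)), r i ^ d := by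
    rw [Finset.sum_Ico_eq_sub _ hle1]
  have hbuck := sum_buckets (d := d) hpos hmono m₂ T hT.2
  have hC : (2:ℝ)^d * C ≤ ∑ n ∈ Finset.Ico (2^(d*m₂)) (2^(d*T)), r n ^ d := by
    rw [hsub]; linarith [hT.1]
  have hfac : ∑ m ∈ Finset.Ico m₂ T, 2^d * ((2:ℝ)^m * sfun d r m)^d
      = 2^d * ∑ m ∈ Finset.Ico m₂ T, ((2:ℝ)^m * sfun d r m)^d := by
    rw [Finset.mul_sum]
  have hpow : (0:ℝ) < 2^d := by positivity
  nlinarith [hC.trans (hbuck.trans_eq hfac)]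

theorem tau_unbounded (hd : 1 ≤ d) (hpos : ∀ n, 0 < r n) (hmono : ∀ n, r (n+1) ≤ r n)
    (hdiv : ¬ Summable fun n => r n ^ d) (C : ℝ) (m₁ : ℕ) :
    ∃ T, C ≤ ∑ m ∈ Finset.Ico m₁ T, taufun d r m := by
  by_cases hcase : ∀ m₂, ∃ m, m₂ ≤ m ∧ (1/2:ℝ) ≤ 2^m * sfun d r m
  · have key : ∀ K : ℕ, ∃ T, m₁ ≤ T ∧ (K : ℝ) * ((2:ℝ)^d)⁻¹ ≤ ∑ m ∈ Finset.Ico m₁ T, taufun d r m := by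
      intro K
      induction K with
      | zero => exact ⟨m₁, le_rfl, by simp⟩
      | succ K ih =>
          obtain ⟨T, hTm, hTs⟩ := ih
          obtain ⟨m, hm, hms⟩ := hcase T
          refine ⟨m+1, by omega, ?_⟩
          have h3 : (0:ℝ) < (2:ℝ)^(m+1) := by positivity
          have h1 : ((2:ℝ)^(m+1))⁻¹ ≤ sfun d r m := by
            have h4 : (1:ℝ) ≤ sfun d r m * 2^(m+1) := by rw [pow_succ]; nlinarith [hms]
            calc ((2:ℝ)^(m+1))⁻¹ = 1 * ((2:ℝ)^(m+1))⁻¹ := by ring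
            _ ≤ (sfun d r m * 2^(m+1)) * ((2:ℝ)^(m+1))⁻¹ :=
                mul_le_mul_of_nonneg_right h4 (by positivity)
            _ = sfun d r m := by field_simp
          have htau : taufun d r m = ((2:ℝ)^d)⁻¹ := by
            unfold taufun rhofun
            rw [min_eq_right h1]
            have hhalf : (2:ℝ)^m * ((2:ℝ)^(m+1))⁻¹ = 2⁻¹ := by
              rw [pow_succ]
              field_simp
            rw [hhalf, inv_pow]
          have hsplit : ∑ x ∈ Finset.Ico m₁ (m+1), taufun d r x
              = ∑ x ∈ Finset.Ico m₁ T, taufun d r x + ∑ x ∈ Finset.Ico T (m+1), taufun d r x := by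
            rw [Finset.sum_Ico_consecutive _ hTm (by omega)]
          have hmem : taufun d r m ≤ ∑ x ∈ Finset.Ico T (m+1), taufun d r x := by
            refine Finset.single_le_sum (fun i _ => tau_nonneg hpos i) ?_
            rw [Finset.mem_Ico]; omega
          rw [hsplit]
          push_cast
          rw [htau] at hmem
          linarith
    obtain ⟨K, hK⟩ := exists_nat_ge (C * 2^d)
    obtain ⟨T, _, hTs⟩ := key K
    refine ⟨T, le_trans ?_ hTs⟩
    have hpow : (0:ℝ) < 2^d := by positivity
    calc C = C * 2^d * ((2:ℝ)^d)⁻¹ := by field_simp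
    _ ≤ (K:ℝ) * ((2:ℝ)^d)⁻¹ := mul_le_mul_of_nonneg_right hK (by positivity)
  · push_neg at hcase
    obtain ⟨m₂, hm₂⟩ := hcase
    set m₃ := max m₁ m₂ with hm₃
    obtain ⟨T, hTge, hTs⟩ := sum_s_unbounded hd hpos hmono hdiv C m₃
    refine ⟨T, ?_⟩
    have heq : ∀ m ∈ Finset.Ico m₃ T, ((2:ℝ)^m * sfun d r m)^d = taufun d r m := by
      intro m hm
      rw [Finset.mem_Ico] at hm
      have h1 := hm₂ m (le_trans (le_max_right _ _) hm.1)
      have h3 : (0:ℝ) < (2:ℝ)^(m+1) := by positivity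
      have h2 : sfun d r m ≤ ((2:ℝ)^(m+1))⁻¹ := by
        have h4 : sfun d r m * 2^(m+1) ≤ 1 := by rw [pow_succ]; nlinarith [h1]
        calc sfun d r m = sfun d r m * 2^(m+1) * ((2:ℝ)^(m+1))⁻¹ := by field_simp
        _ ≤ 1 * ((2:ℝ)^(m+1))⁻¹ := mul_le_mul_of_nonneg_right h4 (by positivity)
        _ = ((2:ℝ)^(m+1))⁻¹ := by ring
      unfold taufun rhofun
      rw [min_eq_left h2]
    have heq' : ∑ m ∈ Finset.Ico m₃ T, ((2:ℝ)^m * sfun d r m)^d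
        = ∑ m ∈ Finset.Ico m₃ T, taufun d r m := Finset.sum_congr rfl heq
    have hsubset : Finset.Ico m₃ T ⊆ Finset.Ico m₁ T := by
      intro z hz
      rw [Finset.mem_Ico] at *
      exact ⟨le_trans (le_max_left _ _) hz.1, hz.2⟩
    calc C ≤ ∑ m ∈ Finset.Ico m₃ T, ((2:ℝ)^m * sfun d r m)^d := hTs
    _ = ∑ m ∈ Finset.Ico m₃ T, taufun d r m := heq'
    _ ≤ ∑ m ∈ Finset.Ico m₁ T, taufun d r m :=
        Finset.sum_le_sum_of_subset_of_nonneg hsubset (fun i _ _ => tau_nonneg hpos i)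
end Diverge

-- new material
def goodIdx (d : ℕ) (x : ℕ → Fin d → ℝ) (N m : ℕ) (k : Fin d → ℤ) : Prop :=
  ∃ n : ℕ, N ≤ n ∧ n ≤ 2^(d*m) ∧ x n ∈ dyadicCube d (m:ℤ) k

open Classical in
def wit (d : ℕ) (x : ℕ → Fin d → ℝ) (N m : ℕ) (k : Fin d → ℤ) : ℕ :=
  if h : goodIdx d x N m k then h.choose else 0

theorem wit_spec {x : ℕ → Fin d → ℝ} {N m : ℕ} {k : Fin d → ℤ}
    (h : goodIdx d x N m k) :
    N ≤ wit d x N m k ∧ wit d x N m k ≤ 2^(d*m) ∧ x (wit d x N m k) ∈ dyadicCube d (m:ℤ) k := by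
  unfold wit
  rw [dif_pos h]
  exact h.choose_spec

def piece (d : ℕ) (x : ℕ → Fin d → ℝ) (r : ℕ → ℝ) (N m : ℕ) (k : Fin d → ℤ) :
    Set (Fin d → ℝ) :=
  Metric.ball (x (wit d x N m k)) (rhofun d r m) ∩ dyadicCube d (m:ℤ) k

theorem piece_subset_cube (x : ℕ → Fin d → ℝ) (r : ℕ → ℝ) (N m : ℕ) (k : Fin d → ℤ) :
    piece d x r N m k ⊆ dyadicCube d (m:ℤ) k := Set.inter_subset_right

theorem piece_subset_ball (x : ℕ → Fin d → ℝ) (r : ℕ → ℝ) (N m : ℕ) (k : Fin d → ℤ) :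
    piece d x r N m k ⊆ Metric.ball (x (wit d x N m k)) (rhofun d r m) := Set.inter_subset_left

theorem half_pow : ∀ m : ℕ, ((2:ℝ)^(m+1))⁻¹ = ((2:ℝ)^(-(m:ℤ)))/2 := by
  intro m
  rw [zpow_neg, zpow_natCast]
  rw [pow_succ]
  field_simp

theorem piece_measurable (x : ℕ → Fin d → ℝ) (r : ℕ → ℝ) (N m : ℕ) (k : Fin d → ℤ) :
    MeasurableSet (piece d x r N m k) := by
  refine (Metric.isOpen_ball.measurableSet).inter ?_
  have : dyadicCube d (m:ℤ) k = Set.pi Set.univ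
      (fun i => Set.Ico ((k i : ℝ) * 2 ^ (-(m:ℤ))) (((k i : ℝ) + 1) * 2 ^ (-(m:ℤ)))) := by
    ext y; simp [dyadicCube, Set.mem_pi, Set.mem_Ico]
  rw [this]
  exact MeasurableSet.univ_pi (fun i => measurableSet_Ico)

theorem piece_vol {x : ℕ → Fin d → ℝ} {r : ℕ → ℝ} {N m : ℕ} {k : Fin d → ℤ}
    (hpos : ∀ n, 0 < r n) (h : goodIdx d x N m k) :
    ENNReal.ofReal (rhofun d r m ^ d) ≤ volume (piece d x r N m k) := by
  refine volume_piece_ge (wit_spec h).2.2 (rho_pos r hpos m) ?_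
  rw [← half_pow]
  exact rho_le r m

theorem piece_subset_EN {x : ℕ → Fin d → ℝ} {r : ℕ → ℝ} {N m : ℕ} {k : Fin d → ℤ}
    (hmono : ∀ n, r (n+1) ≤ r n) (h : goodIdx d x N m k) :
    piece d x r N m k ⊆ ⋃ n ∈ Set.Ici N, Metric.ball (x n) (r n) := by
  have hr : Antitone r := antitone_nat_of_succ_le hmono
  obtain ⟨h1, h2, h3⟩ := wit_spec h
  refine subset_trans (piece_subset_ball x r N m k) ?_
  refine subset_trans
    (Metric.ball_subset_ball (ε₂ := r (wit d x N m k)) ((rho_le_s r m).trans (hr h2)))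
    (Set.subset_biUnion_of_mem (u := fun n => Metric.ball (x n) (r n))
      (show wit d x N m k ∈ Set.Ici N from h1))

theorem cast_pow_sub {e1 e2 : ℕ} (h : e2 ≤ e1) :
    ((2^(e1-e2) : ℕ) : ℝ) = 2^e1 / 2^e2 := by
  have h2 : (2:ℝ)^(e1-e2) * 2^e2 = 2^e1 := by
    rw [← pow_add, Nat.sub_add_cancel h]
  push_cast
  field_simp
  linarith [h2]

theorem nat_le_two_pow (N : ℕ) : (N:ℝ) ≤ 2^N := by
  exact_mod_cast (Nat.lt_two_pow_self (n := N)).le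


def capf (d a Jb t : ℕ) : ℕ := 2^(d*(Jb+t)-(a+4*d))

def gainf (d : ℕ) (r : ℕ → ℝ) (a g i : ℕ) : ℝ :=
  ((2:ℝ)^(a+4*d))⁻¹ * (((2:ℝ)^(d*g))⁻¹ * taufun d r i)

/-- The invariant for the greedy construction. -/
def Inv (x : ℕ → Fin d → ℝ) (r : ℕ → ℝ) (N a g Jb : ℕ) (k₀ : Fin d → ℤ)
    (t : ℕ) (S : Finset (ℕ × (Fin d → ℤ))) : Prop :=
  (∀ p ∈ S, (g + Jb ≤ p.1 ∧ p.1 < g + Jb + t) ∧ goodIdx d x N p.1 p.2 ∧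
      dyadicCube d (p.1:ℤ) p.2 ⊆ dyadicCube d (g:ℤ) k₀) ∧
  ((S : Set (ℕ × (Fin d → ℤ))).Pairwise fun p q =>
      Disjoint (piece d x r N p.1 p.2) (piece d x r N q.1 q.2)) ∧
  S.card ≤ capf d a Jb t ∧
  min ((((2:ℝ)^(a+2*d+3))⁻¹) * ((2:ℝ)^(d*g))⁻¹)
      (∑ i ∈ Finset.Ico (g+Jb) (g+Jb+t), gainf d r a g i)
    ≤ ∑ p ∈ S, rhofun d r p.1 ^ d

set_option maxHeartbeats 2000000 in
theorem key_induction (hd : 1 ≤ d) (x : ℕ → Fin d → ℝ) (r : ℕ → ℝ)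
    (hpos : ∀ n, 0 < r n) (hmono : ∀ n, r (n+1) ≤ r n)
    (N a J g : ℕ) (k₀ : Fin d → ℤ)
    (HC : ∀ j : ℕ, J ≤ j → (2:ℝ)^(d*j) / 2^a ≤ ((MSet x (g:ℤ) k₀ j).ncard : ℝ)) :
    ∀ t : ℕ, ∃ S, Inv x r N a g (J+a+N+4*d+8) k₀ t S := by
  classical
  set Jb := J + a + N + 4*d + 8 with hJb
  intro t
  induction t with
  | zero =>
      refine ⟨∅, by simp, by simp, by simp, ?_⟩
      simp only [Finset.sum_empty, add_zero, Finset.Ico_self]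
      exact min_le_of_right_le le_rfl
  | succ t ih =>
      obtain ⟨S, hmem, hdisj, hcard, hV⟩ := ih
      set m := g + Jb + t with hm
      set j := Jb + t with hj
      have hmgj : m = g + j := by omega
      have hdj : a + 4*d ≤ d*j := by
        have h2 : j ≤ d*j := Nat.le_mul_of_pos_left j (by omega)
        have h1 : a + 4*d ≤ j := by omega
        exact h1.trans h2
      -- abbreviations
      set L : ℝ := ((2:ℝ)^(d*g))⁻¹ with hL
      set δ₀ : ℝ := ((2:ℝ)^(a+2*d+3))⁻¹ with hδ₀
      set V : ℝ := ∑ p ∈ S, rhofun d r p.1 ^ d with hVdef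
      by_cases hstop : δ₀ * L ≤ V
      · refine ⟨S, ?_, hdisj, ?_, ?_⟩
        · intro p hp
          obtain ⟨⟨h1, h2⟩, h3⟩ := hmem p hp
          exact ⟨⟨h1, by omega⟩, h3⟩
        · refine hcard.trans ?_
          unfold capf
          refine Nat.pow_le_pow_right (by norm_num) ?_
          exact Nat.sub_le_sub_right (Nat.mul_le_mul_left d (by omega)) _
        · exact le_trans (min_le_left _ _) hstop
      · push_neg at hstop
        -- counting at scale m
        set M := 2^(d*m) with hM
        set Fins : Finset (Fin d → ℤ) :=
          ((Finset.Icc 1 M).image fun n => cubeIdx (m:ℤ) (x n)).filter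
            (fun k => dyadicCube d (m:ℤ) k ⊆ dyadicCube d (g:ℤ) k₀) with hFins
        have hMS : MSet x (g:ℤ) k₀ j ⊆ ↑Fins := by
          rintro k' ⟨hsub, n, hn1, hnM, hx⟩
          have hcast : (g:ℤ) + (j:ℕ) = ((m:ℕ):ℤ) := by push_cast; omega
          rw [hcast] at hsub hx
          have hnM' : n ≤ M := by
            have he1 : (2:ℝ) ^ ((d:ℤ) * ((g:ℤ) + (j:ℕ))) = ((M:ℕ):ℝ) := by
              have he2 : ((d:ℤ) * ((m:ℕ):ℤ)) = ((d*m : ℕ) : ℤ) := by push_cast; ring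
              rw [hcast, he2, zpow_natCast, hM]
              push_cast
              ring
            rw [he1] at hnM
            exact_mod_cast hnM
          simp only [hFins, Finset.coe_filter, Set.mem_setOf_eq, Finset.mem_image,
            Finset.mem_Icc]
          exact ⟨⟨n, ⟨hn1, hnM'⟩, (mem_dyadicCube_iff_cubeIdx.1 hx).symm⟩, hsub⟩
        have hcard1 : (2:ℝ)^(d*j) / 2^a ≤ (Fins.card : ℝ) := by
          refine (HC j (by omega)).trans ?_
          have := Set.ncard_le_ncard hMS Fins.finite_toSet
          rw [Set.ncard_coe_finset] at this
          exact_mod_cast this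
        -- blocked and lost cubes
        set NLoss : Finset (Fin d → ℤ) := (Finset.Icc 1 N).image fun n => cubeIdx (m:ℤ) (x n)
          with hNLoss
        set BlockF : Finset (Fin d → ℤ) := S.biUnion (fun p =>
          Finset.Icc
            (fun i => ⌊(x (wit d x N p.1 p.2) i - rhofun d r p.1) * 2^((m:ℕ):ℤ)⌋)
            (fun i => ⌊(x (wit d x N p.1 p.2) i + rhofun d r p.1) * 2^((m:ℕ):ℤ)⌋)) with hBlockF
        set Cand : Finset (Fin d → ℤ) := Fins.filter
          (fun k => goodIdx d x N m k ∧
            ∀ p ∈ S, dyadicCube d (m:ℤ) k ∩ piece d x r N p.1 p.2 = ∅) with hCand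
        have hsubsets : Fins ⊆ Cand ∪ NLoss ∪ BlockF := by
          intro k hk
          by_cases hG : goodIdx d x N m k
          · by_cases hB : ∀ p ∈ S, dyadicCube d (m:ℤ) k ∩ piece d x r N p.1 p.2 = ∅
            · exact Finset.mem_union_left _ (Finset.mem_union_left _
                (Finset.mem_filter.2 ⟨hk, hG, hB⟩))
            · push_neg at hB
              obtain ⟨p, hp, hne⟩ := hB
              refine Finset.mem_union_right _ (Finset.mem_biUnion.2 ⟨p, hp, ?_⟩)
              have hne' : (dyadicCube d (m:ℤ) k ∩
                  Metric.ball (x (wit d x N p.1 p.2)) (rhofun d r p.1)).Nonempty := by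
                obtain ⟨z, hz1, hz2⟩ := hne
                exact ⟨z, hz1, piece_subset_ball x r N p.1 p.2 hz2⟩
              have := meet_ball_subset_Icc (d := d) m (x (wit d x N p.1 p.2))
                (ρ := rhofun d r p.1) hne'
              exact_mod_cast this
          · rw [hFins, Finset.mem_filter, Finset.mem_image] at hk
            obtain ⟨⟨n₀, hn₀, hkn₀⟩, _⟩ := hk
            rw [Finset.mem_Icc] at hn₀
            have hx₀ : x n₀ ∈ dyadicCube d (m:ℤ) k := mem_dyadicCube_iff_cubeIdx.2 hkn₀.symm
            have hn₀N : n₀ ≤ N := by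
              by_contra hcon
              exact hG ⟨n₀, by omega, hn₀.2, hx₀⟩
            refine Finset.mem_union_left _ (Finset.mem_union_right _ ?_)
            rw [hNLoss, Finset.mem_image]
            exact ⟨n₀, Finset.mem_Icc.2 ⟨hn₀.1, hn₀N⟩, hkn₀⟩
        have hcards : Fins.card ≤ Cand.card + NLoss.card + BlockF.card := by
          calc Fins.card ≤ (Cand ∪ NLoss ∪ BlockF).card := Finset.card_le_card hsubsets
          _ ≤ (Cand ∪ NLoss).card + BlockF.card := Finset.card_union_le _ _
          _ ≤ Cand.card + NLoss.card + BlockF.card := by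
              have := Finset.card_union_le Cand NLoss
              omega
        -- real bound on the blocked cubes
        set BFn : (ℕ × (Fin d → ℤ)) → Finset (Fin d → ℤ) := fun p =>
          Finset.Icc
            (fun i => ⌊(x (wit d x N p.1 p.2) i - rhofun d r p.1) * 2^((m:ℕ):ℤ)⌋)
            (fun i => ⌊(x (wit d x N p.1 p.2) i + rhofun d r p.1) * 2^((m:ℕ):ℤ)⌋) with hBFn
        have hBF : BlockF = S.biUnion BFn := rfl
        have hBreal : (BlockF.card : ℝ) ≤ 4^d * 2^(d*m) * V + 4^d * S.card := by
          have h1 : BlockF.card ≤ ∑ p ∈ S, (BFn p).card := by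
            rw [hBF]; exact Finset.card_biUnion_le
          have h2 : ∀ p ∈ S, ((BFn p).card : ℝ)
              ≤ 4^d * ((rhofun d r p.1)^d * 2^(d*m) + 1) := by
            intro p hp
            have hρ := (rho_pos (d := d) r hpos p.1).le
            have step1 : ((BFn p).card : ℝ) ≤ (2*(rhofun d r p.1)*2^m + 2)^d := by
              refine card_Icc_le _ _ (by positivity) ?_
              intro i
              have hf1 := Int.floor_le ((x (wit d x N p.1 p.2) i + rhofun d r p.1) * 2^((m:ℕ):ℤ))
              have hf2 := Int.sub_one_lt_floor ((x (wit d x N p.1 p.2) i - rhofun d r p.1) * 2^((m:ℕ):ℤ))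
              have hz2 : rhofun d r p.1 * (2:ℝ)^((m:ℕ):ℤ) = rhofun d r p.1 * 2^m := by
                rw [zpow_natCast]
              nlinarith [hf1, hf2, hz2]
            refine step1.trans ?_
            have hb := pow_bound (u := rhofun d r p.1 * 2^m) (by positivity) d
            have he : 2*(rhofun d r p.1)*2^m + 2 = 2*(rhofun d r p.1 * 2^m) + 2 := by ring
            rw [he]
            refine hb.trans ?_
            have he2 : (rhofun d r p.1 * 2^m)^d = (rhofun d r p.1)^d * 2^(d*m) := by
              rw [mul_pow, ← pow_mul, mul_comm m d]
            rw [he2]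
          calc (BlockF.card : ℝ) ≤ ∑ p ∈ S, ((BFn p).card : ℝ) := by exact_mod_cast h1
          _ ≤ ∑ p ∈ S, 4^d * ((rhofun d r p.1)^d * 2^(d*m) + 1) := Finset.sum_le_sum h2
          _ = 4^d * 2^(d*m) * V + 4^d * S.card := by
              have he3 : ∀ p ∈ S, 4^d * ((rhofun d r p.1)^d * 2^(d*m) + 1)
                  = 4^d * 2^(d*m) * (rhofun d r p.1)^d + 4^d := fun p _ => by ring
              rw [Finset.sum_congr rfl he3, Finset.sum_add_distrib, ← Finset.mul_sum,
                Finset.sum_const, nsmul_eq_mul, hVdef]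
              ring
        -- numeric bounds
        have F1 : (4:ℝ)^d = 2^(2*d) := by
          rw [show (4:ℝ) = 2^2 by norm_num, ← pow_mul]
        have F2 : (2:ℝ)^(d*m) = 2^(d*g) * 2^(d*j) := by
          rw [← pow_add]
          congr 1
          rw [hmgj, Nat.mul_add]
        set B : ℝ := 2^(d*j) / 2^a with hB
        have hBpos : 0 < B := by rw [hB]; positivity
        have hcapc : ((capf d a Jb t : ℕ) : ℝ) = 2^(d*j)/2^(a+4*d) := by
          unfold capf
          rw [← hj, cast_pow_sub hdj]
        have c1 : (NLoss.card : ℝ) ≤ B/8 := by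
          have hc : NLoss.card ≤ N := by
            refine (Finset.card_image_le).trans ?_
            rw [Nat.card_Icc]
            omega
          have hc2 : (NLoss.card : ℝ) ≤ N := by exact_mod_cast hc
          have hc3 : (N:ℝ) ≤ 2^N := nat_le_two_pow N
          have hc4 : (2:ℝ)^(N+a+3) ≤ 2^(d*j) := by
            refine pow_le_pow_right₀ (by norm_num) ?_
            have h2 : j ≤ d*j := Nat.le_mul_of_pos_left j (by omega)
            omega
          have hc5 : (2:ℝ)^(N+a+3) = 2^N*2^a*8 := by
            rw [pow_add, pow_add]; norm_num
          rw [hc5] at hc4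
          rw [hB, div_div, le_div_iff₀ (by positivity)]
          calc (NLoss.card:ℝ) * (2^a*8) ≤ 2^N * (2^a*8) :=
                mul_le_mul_of_nonneg_right (hc2.trans hc3) (by positivity)
          _ = 2^N*2^a*8 := by ring
          _ ≤ 2^(d*j) := hc4
        have c2 : 4^d * 2^(d*m) * V ≤ B/8 := by
          have e1 : (4:ℝ)^d * 2^(d*m) * (δ₀*L) = B/8 := by
            rw [F1, F2, hδ₀, hL, hB,
              show (2:ℝ)^(a+2*d+3) = 2^a*2^(2*d)*8 by rw [pow_add, pow_add]; norm_num]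
            field_simp
          have hpos4 : (0:ℝ) < 4^d * 2^(d*m) := by positivity
          calc 4^d * 2^(d*m) * V ≤ 4^d * 2^(d*m) * (δ₀*L) := by nlinarith [hstop.le]
          _ = B/8 := e1
        have hcc : (S.card : ℝ) ≤ 2^(d*j)/2^(a+4*d) := by
          rw [← hcapc]; exact_mod_cast hcard
        have e3 : (4:ℝ)^d * ((2:ℝ)^(d*j)/2^(a+4*d)) = B / 2^(2*d) := by
          rw [F1, hB, show (2:ℝ)^(a+4*d) = 2^a * (2^(2*d)*2^(2*d)) by
            rw [show a+4*d = a+(2*d+2*d) by omega, pow_add, pow_add]]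
          field_simp
        have h4d : (4:ℝ) ≤ 2^(2*d) := by
          calc (4:ℝ) = 2^2 := by norm_num
          _ ≤ 2^(2*d) := pow_le_pow_right₀ (by norm_num) (by omega)
        have c3 : 4^d * (S.card:ℝ) ≤ B/4 := by
          have h1 : 4^d*(S.card:ℝ) ≤ B / 2^(2*d) := by
            rw [← e3]
            have h2 : (0:ℝ) < 4^d := by positivity
            nlinarith [hcc]
          refine h1.trans ?_
          exact div_le_div_of_nonneg_left hBpos.le (by norm_num) h4d
        have c5 : ((capf d a Jb t : ℕ):ℝ) ≤ B/2 := by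
          rw [hcapc, hB, div_div]
          refine div_le_div_of_nonneg_left (by positivity) (by positivity) ?_
          calc (2:ℝ)^a*2 ≤ 2^a*2^(4*d) := by
                have h5 : (2:ℝ) ≤ 2^(4*d) := by
                  calc (2:ℝ) = 2^1 := by norm_num
                  _ ≤ 2^(4*d) := pow_le_pow_right₀ (by norm_num) (by omega)
                nlinarith [pow_pos (show (0:ℝ) < 2 by norm_num) a]
          _ = 2^(a+4*d) := by rw [pow_add]
        have hcard4 : (Fins.card:ℝ) ≤ (Cand.card:ℝ) + NLoss.card + BlockF.card := by
          exact_mod_cast hcards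
        have hcaple : capf d a Jb t ≤ Cand.card := by
          have hr : ((capf d a Jb t : ℕ):ℝ) ≤ (Cand.card:ℝ) := by linarith
          exact_mod_cast hr
        -- select the new cubes
        obtain ⟨T', hT'sub, hT'card⟩ := Finset.exists_subset_card_eq hcaple
        have hT'c : ∀ k ∈ T', goodIdx d x N m k ∧
            ∀ p ∈ S, dyadicCube d (m:ℤ) k ∩ piece d x r N p.1 p.2 = ∅ := fun k hk =>
          (Finset.mem_filter.1 (hT'sub hk)).2
        have hT'fins : ∀ k ∈ T', dyadicCube d (m:ℤ) k ⊆ dyadicCube d (g:ℤ) k₀ := fun k hk =>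
          (Finset.mem_filter.1 (Finset.mem_filter.1 (hT'sub hk)).1).2
        have hinj : Function.Injective (fun k : Fin d → ℤ => (m, k)) := fun k k' h =>
          congrArg Prod.snd h
        have hdisjU : Disjoint S (T'.image fun k => (m, k)) := by
          rw [Finset.disjoint_left]
          intro p hp hp2
          obtain ⟨k, hk, rfl⟩ := Finset.mem_image.1 hp2
          exact absurd (hmem (m, k) hp).1.2 (lt_irrefl m)
        have hsd : ∀ p ∈ S, ∀ k ∈ T',
            Disjoint (piece d x r N p.1 p.2) (piece d x r N m k) := by
          intro p hp k hk
          refine Set.disjoint_left.2 fun z hz1 hz2 => ?_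
          have h0 := (hT'c k hk).2 p hp
          have : z ∈ dyadicCube d (m:ℤ) k ∩ piece d x r N p.1 p.2 :=
            ⟨piece_subset_cube x r N m k hz2, hz1⟩
          rw [h0] at this
          exact this
        refine ⟨S ∪ T'.image (fun k => (m, k)), ?_, ?_, ?_, ?_⟩
        · intro p hp
          rcases Finset.mem_union.1 hp with hp1 | hp2
          · obtain ⟨⟨ha1, ha2⟩, ha3⟩ := hmem p hp1
            exact ⟨⟨ha1, by omega⟩, ha3⟩
          · obtain ⟨k, hk, rfl⟩ := Finset.mem_image.1 hp2
            exact ⟨⟨by omega, by omega⟩, (hT'c k hk).1, hT'fins k hk⟩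
        · rw [Finset.coe_union, Finset.coe_image]
          intro p hp q hq hne
          rcases hp with hp | hp <;> rcases hq with hq | hq
          · exact hdisj hp hq hne
          · obtain ⟨k, hk, rfl⟩ := hq
            exact hsd p hp k hk
          · obtain ⟨k, hk, rfl⟩ := hp
            exact (hsd q hq k hk).symm
          · obtain ⟨k, hk, rfl⟩ := hp
            obtain ⟨k', hk', rfl⟩ := hq
            have hkk : k ≠ k' := fun h => hne (congrArg (Prod.mk m) h)
            refine Set.disjoint_left.2 fun z hz1 hz2 => ?_
            have hz : z ∈ dyadicCube d (m:ℤ) k ∩ dyadicCube d (m:ℤ) k' :=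
              ⟨piece_subset_cube x r N m k hz1, piece_subset_cube x r N m k' hz2⟩
            rw [dyadicCube_disjoint hkk] at hz
            exact hz
        · rw [Finset.card_union_of_disjoint hdisjU, Finset.card_image_of_injective _ hinj,
            hT'card]
          have h1 : d*(Jb+(t+1)) = d*(Jb+t) + d := by ring
          have h1' : d*(Jb+t) = d*j := by rw [hj]
          unfold capf
          calc S.card + 2^(d*(Jb+t)-(a+4*d))
              ≤ 2^(d*(Jb+t)-(a+4*d)) + 2^(d*(Jb+t)-(a+4*d)) :=
                Nat.add_le_add_right hcard _
          _ = 2^(d*(Jb+t)-(a+4*d)+1) := by rw [pow_succ]; omega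
          _ ≤ 2^(d*(Jb+(t+1))-(a+4*d)) := by
                refine Nat.pow_le_pow_right (by norm_num) ?_
                omega
        · rw [Finset.sum_union hdisjU, Finset.sum_image (fun k _ k' _ h => hinj h)]
          have hsum2 : ∑ k ∈ T', rhofun d r (m, k).1 ^ d
              = ((capf d a Jb t : ℕ):ℝ) * rhofun d r m ^ d := by
            have hcg : ∀ k ∈ T', rhofun d r (m, k).1 ^ d = rhofun d r m ^ d := fun k _ => rfl
            rw [Finset.sum_congr rfl hcg, Finset.sum_const, hT'card, nsmul_eq_mul]
          have hgaineq : ((capf d a Jb t : ℕ):ℝ) * rhofun d r m ^ d = gainf d r a g m := by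
            rw [hcapc]
            unfold gainf taufun
            rw [mul_pow, ← pow_mul, mul_comm m d, F2]
            field_simp
          have hidx : g + Jb + (t+1) = (g + Jb + t) + 1 := by omega
          rw [hidx]
          have hsplit : ∑ i ∈ Finset.Ico (g+Jb) ((g+Jb+t)+1), gainf d r a g i
              = ∑ i ∈ Finset.Ico (g+Jb) (g+Jb+t), gainf d r a g i + gainf d r a g (g+Jb+t) :=
            Finset.sum_Ico_succ_top (by omega) _
          rcases le_or_gt (δ₀*L) (∑ i ∈ Finset.Ico (g+Jb) (g+Jb+t), gainf d r a g i) with hc | hc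
          · exfalso
            rw [min_eq_left hc] at hV
            linarith
          · rw [min_eq_right hc.le] at hV
            refine (min_le_right _ _).trans ?_
            rw [hsplit, hsum2, hgaineq]
            have : gainf d r a g (g+Jb+t) = gainf d r a g m := by rw [hm]
            rw [this]
            linarith




set_option maxHeartbeats 1000000 in
theorem key (hd : 1 ≤ d) (x : ℕ → Fin d → ℝ) (r : ℕ → ℝ)
    (hpos : ∀ n, 0 < r n) (hmono : ∀ n, r (n+1) ≤ r n)
    (hdiv : ¬ Summable fun n => r n ^ d)
    (N a J g : ℕ) (k₀ : Fin d → ℤ)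
    (HC : ∀ j : ℕ, J ≤ j → (2:ℝ)^(d*j) / 2^a ≤ ((MSet x (g:ℤ) k₀ j).ncard : ℝ)) :
    ENNReal.ofReal (((2:ℝ)^(a+2*d+3))⁻¹ * ((2:ℝ)^(d*g))⁻¹)
      ≤ volume (dyadicCube d (g:ℤ) k₀ ∩ ⋃ n ∈ Set.Ici N, Metric.ball (x n) (r n)) := by
  obtain ⟨T, hT⟩ := tau_unbounded hd hpos hmono hdiv (2^(2*d)) (g + (J+a+N+4*d+8))
  have hTm : g + (J+a+N+4*d+8) ≤ T := by
    by_contra hcon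
    push_neg at hcon
    rw [Finset.Ico_eq_empty (by omega), Finset.sum_empty] at hT
    have h0 : (0:ℝ) < 2^(2*d) := by positivity
    linarith
  obtain ⟨S, hmem, hdisj, _, hV⟩ :=
    key_induction hd x r hpos hmono N a J g k₀ HC (T - (g + (J+a+N+4*d+8)))
  have hrange : g + (J+a+N+4*d+8) + (T - (g + (J+a+N+4*d+8))) = T := by omega
  rw [hrange] at hV
  set δ₀ : ℝ := ((2:ℝ)^(a+2*d+3))⁻¹ with hδ₀
  set L : ℝ := ((2:ℝ)^(d*g))⁻¹ with hL
  have hsum : δ₀ * L ≤ ∑ i ∈ Finset.Ico (g + (J+a+N+4*d+8)) T, gainf d r a g i := by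
    have he : ∀ i ∈ Finset.Ico (g + (J+a+N+4*d+8)) T, gainf d r a g i
        = ((2:ℝ)^(a+4*d))⁻¹ * L * taufun d r i := fun i _ => by
      unfold gainf; rw [hL]; ring
    rw [Finset.sum_congr rfl he, ← Finset.mul_sum]
    have hLpos : (0:ℝ) < L := by rw [hL]; positivity
    have h1 : δ₀ ≤ ((2:ℝ)^(a+4*d))⁻¹ * 2^(2*d) := by
      rw [hδ₀]
      rw [show (2:ℝ)^(a+4*d) = 2^(a+2*d)*2^(2*d) by rw [← pow_add]; congr 1; omega]
      rw [show (2:ℝ)^(a+2*d+3) = 2^(a+2*d)*8 by rw [pow_add]; norm_num]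
      have hp1 : (0:ℝ) < 2^(a+2*d) := by positivity
      have hp2 : (0:ℝ) < 2^(2*d) := by positivity
      rw [mul_inv, mul_inv]
      calc ((2:ℝ)^(a+2*d))⁻¹ * 8⁻¹ ≤ ((2:ℝ)^(a+2*d))⁻¹ * 1 := by
            nlinarith [inv_pos.2 hp1]
      _ = ((2:ℝ)^(a+2*d))⁻¹ * (2^(2*d))⁻¹ * 2^(2*d) := by field_simp
    calc δ₀ * L ≤ (((2:ℝ)^(a+4*d))⁻¹ * 2^(2*d)) * L := by nlinarith [hLpos, h1]
    _ = ((2:ℝ)^(a+4*d))⁻¹ * L * 2^(2*d) := by ring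
    _ ≤ ((2:ℝ)^(a+4*d))⁻¹ * L * ∑ i ∈ Finset.Ico (g + (J+a+N+4*d+8)) T, taufun d r i := by
        have hpinv : (0:ℝ) < ((2:ℝ)^(a+4*d))⁻¹ * L := by positivity
        nlinarith [hT, hpinv]
  rw [min_eq_left hsum] at hV
  have hsub : ∀ p ∈ S, piece d x r N p.1 p.2 ⊆
      dyadicCube d (g:ℤ) k₀ ∩ ⋃ n ∈ Set.Ici N, Metric.ball (x n) (r n) := by
    intro p hp
    refine Set.subset_inter ?_ (piece_subset_EN hmono (hmem p hp).2.1)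
    exact (piece_subset_cube x r N p.1 p.2).trans (hmem p hp).2.2
  calc ENNReal.ofReal (δ₀ * L) ≤ ENNReal.ofReal (∑ p ∈ S, rhofun d r p.1 ^ d) :=
        ENNReal.ofReal_le_ofReal hV
  _ = ∑ p ∈ S, ENNReal.ofReal (rhofun d r p.1 ^ d) :=
        ENNReal.ofReal_sum_of_nonneg (fun p _ => pow_nonneg (rho_pos r hpos p.1).le d)
  _ ≤ ∑ p ∈ S, volume (piece d x r N p.1 p.2) :=
        Finset.sum_le_sum (fun p hp => piece_vol hpos (hmem p hp).2.1)
  _ = volume (⋃ p ∈ S, piece d x r N p.1 p.2) :=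
        (measure_biUnion_finset hdisj (fun p _ => piece_measurable x r N p.1 p.2)).symm
  _ ≤ _ := measure_mono (Set.iUnion₂_subset hsub)


theorem dyadicCube_measurable (j : ℤ) (k : Fin d → ℤ) :
    MeasurableSet (dyadicCube d j k) := by
  have : dyadicCube d j k = Set.pi Set.univ
      (fun i => Set.Ico ((k i : ℝ) * 2 ^ (-j)) (((k i : ℝ) + 1) * 2 ^ (-j))) := by
    ext y; simp [dyadicCube, Set.mem_pi, Set.mem_Ico]
  rw [this]
  exact MeasurableSet.univ_pi (fun i => measurableSet_Ico)

theorem volume_dyadicCube_nat (g : ℕ) (k : Fin d → ℤ) :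
    volume (dyadicCube d (g:ℤ) k) = ENNReal.ofReal (((2:ℝ)^(d*g))⁻¹) := by
  rw [volume_dyadicCube]
  congr 1
  rw [zpow_neg, inv_pow, zpow_natCast, ← pow_mul, mul_comm g d]

/-- The covering argument: if near every point of `F`, every small dyadic cube carries a
`δ`-proportion of the (measurable) set `E`, and `F` is disjoint from `E`, then `F` is null. -/
theorem cover_null (hd : 1 ≤ d) (Gmin : ℕ) (δ : ℝ) (hδ : 0 < δ) (hδ1 : δ ≤ 1)
    (E : Set (Fin d → ℝ)) (hE : MeasurableSet E)
    (F : Set (Fin d → ℝ)) (hFfin : volume F ≠ ⊤) (hFE : Disjoint F E)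
    (hcube : ∀ z ∈ F, ∀ g : ℕ, Gmin ≤ g →
      ENNReal.ofReal (δ * ((2:ℝ)^(d*g))⁻¹)
        ≤ volume (dyadicCube d (g:ℤ) (cubeIdx (g:ℤ) z) ∩ E)) :
    volume F = 0 := by
  classical
  by_contra hF0
  set c : ℝ≥0∞ := ENNReal.ofReal (1-δ) with hc
  have hc1 : c < 1 := by
    rw [hc, ← ENNReal.ofReal_one]
    rw [ENNReal.ofReal_lt_ofReal_iff (by norm_num)]
    linarith
  -- main estimate: for every positive ε, volume F ≤ c * (volume F + ε)
  have main : ∀ ε : ℝ≥0, 0 < ε → volume F ≤ c * (volume F + ε) := by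
    intro ε hε
    -- an open superset of F of measure < volume F + ε
    have hlt : volume F < volume F + ε := by
      refine ENNReal.lt_add_right hFfin ?_
      simpa using hε.ne'
    obtain ⟨O, hFO, hOopen, hOvol⟩ := Set.exists_isOpen_lt_of_lt F _ hlt
    -- minimal admissible generations
    have hex : ∀ z ∈ F, ∃ g : ℕ, Gmin ≤ g ∧ dyadicCube d (g:ℤ) (cubeIdx (g:ℤ) z) ⊆ O := by
      intro z hz
      obtain ⟨ε', hε', hball⟩ := Metric.isOpen_iff.1 hOopen z (hFO hz)
      obtain ⟨n, hn⟩ := exists_pow_lt_of_lt_one hε' (by norm_num : (1:ℝ)/2 < 1)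
      refine ⟨max Gmin n, le_max_left _ _, ?_⟩
      refine (dyadicCube_subset_ball hd (self_mem_dyadicCube _ z)).trans
        ((Metric.ball_subset_ball ?_).trans hball)
      have h1 : ((1:ℝ)/2)^n = (2:ℝ)^(-(n:ℤ)) := by
        rw [zpow_neg, zpow_natCast]
        rw [div_pow, one_pow]
        rw [inv_eq_one_div]
      have h2 : (2:ℝ)^(-(max Gmin n : ℕ):ℤ) ≤ (2:ℝ)^(-(n:ℤ)) := by
        refine zpow_le_zpow_right₀ (by norm_num) ?_
        simp only [neg_le_neg_iff]
        exact_mod_cast le_max_right Gmin n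
      rw [h1] at hn
      linarith
    -- the family of minimal cubes
    set D : Set (ℕ × (Fin d → ℤ)) := {q | ∃ z ∈ F, q.2 = cubeIdx (q.1:ℤ) z ∧
      (Gmin ≤ q.1 ∧ dyadicCube d (q.1:ℤ) q.2 ⊆ O) ∧
      ∀ g' : ℕ, Gmin ≤ g' → dyadicCube d (g':ℤ) (cubeIdx (g':ℤ) z) ⊆ O → q.1 ≤ g'} with hD
    have hDcount : D.Countable := Set.to_countable D
    have hcover : F ⊆ ⋃ q ∈ D, dyadicCube d (q.1:ℤ) q.2 := by
      intro z hz
      obtain ⟨g0, hg0⟩ := hex z hz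
      have hfind := Nat.find_spec (⟨g0, hg0⟩ : ∃ g : ℕ, Gmin ≤ g ∧
        dyadicCube d (g:ℤ) (cubeIdx (g:ℤ) z) ⊆ O)
      set gz := Nat.find (⟨g0, hg0⟩ : ∃ g : ℕ, Gmin ≤ g ∧
        dyadicCube d (g:ℤ) (cubeIdx (g:ℤ) z) ⊆ O) with hgz
      refine Set.mem_biUnion (?_ : ((gz, cubeIdx (gz:ℤ) z) : ℕ × (Fin d → ℤ)) ∈ D) ?_
      · refine ⟨z, hz, rfl, hfind, ?_⟩
        intro g' h1 h2
        exact Nat.find_min' _ ⟨h1, h2⟩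
      · exact self_mem_dyadicCube _ z
    have hpair : D.Pairwise fun q q' =>
        Disjoint (dyadicCube d (q.1:ℤ) q.2) (dyadicCube d (q'.1:ℤ) q'.2) := by
      have hkey : ∀ q ∈ D, ∀ q' ∈ D, q.1 ≤ q'.1 →
          (dyadicCube d (q.1:ℤ) q.2 ∩ dyadicCube d (q'.1:ℤ) q'.2).Nonempty → q = q' := by
        rintro ⟨gq, kq⟩ ⟨zq, hzq, hkq, hminq1, hminq2⟩ ⟨gp, kp⟩ ⟨zp, hzp, hkp, hminp1, hminp2⟩
          hle ⟨w, hw1, hw2⟩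
        simp only [] at hw1 hw2 hkq hkp hminq1 hminp1 hle ⊢
        -- the smaller-generation cube contains the other
        have hw1' : kq = cubeIdx (gq:ℤ) w := mem_dyadicCube_iff_cubeIdx.1 hw1
        have hw2' : kp = cubeIdx (gp:ℤ) w := mem_dyadicCube_iff_cubeIdx.1 hw2
        have hsub : dyadicCube d (gp:ℤ) kp ⊆ dyadicCube d (gq:ℤ) kq := by
          rw [hw1', hw2']
          exact cubeIdx_cube_mono hle w
        -- then zp lies in the cube of generation gq, so minimality for zp gives gq = gp
        have hzpq : zp ∈ dyadicCube d (gq:ℤ) kq := by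
          refine hsub ?_
          rw [hkp]
          exact self_mem_dyadicCube _ zp
        have hkqzp : kq = cubeIdx (gq:ℤ) zp := mem_dyadicCube_iff_cubeIdx.1 hzpq
        have hge : gp ≤ gq := by
          refine hminp2 gq hminq1.1 ?_
          rw [← hkqzp]
          exact hminq1.2
        have hgeq : gq = gp := le_antisymm hle hge
        subst hgeq
        have : kq = kp := by rw [hw1', hw2']
        rw [this]
      intro q hq q' hq' hne
      rw [Set.disjoint_iff_inter_eq_empty]
      by_contra hcon
      rcases le_total q.1 q'.1 with h | h
      · exact hne (hkey q hq q' hq' h (Set.nonempty_iff_ne_empty.2 hcon))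
      · refine hne (hkey q' hq' q hq h ?_).symm
        rw [Set.inter_comm] at hcon
        exact Set.nonempty_iff_ne_empty.2 hcon
    -- volume estimates
    have hperq : ∀ q ∈ D, volume (F ∩ dyadicCube d (q.1:ℤ) q.2)
        ≤ c * volume (dyadicCube d (q.1:ℤ) q.2) := by
      rintro ⟨gq, kq⟩ ⟨zq, hzq, hkq, hq1, hq2⟩
      simp only [] at hkq hq1 ⊢
      have hEq := hcube zq hzq gq hq1.1
      rw [← hkq] at hEq
      have h1 : F ∩ dyadicCube d (gq:ℤ) kq ⊆ dyadicCube d (gq:ℤ) kq \ E := by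
        intro w ⟨hw1, hw2⟩
        exact ⟨hw2, fun hwE => (Set.disjoint_left.1 hFE) hw1 hwE⟩
      refine (measure_mono h1).trans ?_
      have h2 : volume (dyadicCube d (gq:ℤ) kq \ E)
          = volume (dyadicCube d (gq:ℤ) kq) - volume (dyadicCube d (gq:ℤ) kq ∩ E) := by
        rw [← Set.diff_self_inter]
        refine measure_diff Set.inter_subset_left ((dyadicCube_measurable _ _).inter hE).nullMeasurableSet ?_
        refine ne_top_of_le_ne_top ?_ (measure_mono (Set.inter_subset_left))
        rw [volume_dyadicCube_nat]
        exact ENNReal.ofReal_ne_top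
      rw [h2, volume_dyadicCube_nat]
      calc ENNReal.ofReal (((2:ℝ)^(d*gq))⁻¹) - volume (dyadicCube d (gq:ℤ) kq ∩ E)
          ≤ ENNReal.ofReal (((2:ℝ)^(d*gq))⁻¹) - ENNReal.ofReal (δ * ((2:ℝ)^(d*gq))⁻¹) :=
            tsub_le_tsub_left hEq _
      _ = ENNReal.ofReal (((2:ℝ)^(d*gq))⁻¹ - δ * ((2:ℝ)^(d*gq))⁻¹) := by
            rw [ENNReal.ofReal_sub _ (by positivity)]
      _ = c * ENNReal.ofReal (((2:ℝ)^(d*gq))⁻¹) := by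
            rw [hc, ← ENNReal.ofReal_mul (by linarith)]
            congr 1
            ring
    calc volume F = volume (F ∩ ⋃ q ∈ D, dyadicCube d (q.1:ℤ) q.2) := by
          rw [Set.inter_eq_self_of_subset_left hcover]
    _ ≤ volume (⋃ q ∈ D, F ∩ dyadicCube d (q.1:ℤ) q.2) := by
          rw [Set.inter_iUnion₂]
    _ ≤ ∑' q : D, volume (F ∩ dyadicCube d ((q:ℕ × (Fin d → ℤ)).1:ℤ) (q:ℕ × (Fin d → ℤ)).2) :=
          measure_biUnion_le volume hDcount _
    _ ≤ ∑' q : D, c * volume (dyadicCube d ((q:ℕ × (Fin d → ℤ)).1:ℤ) (q:ℕ × (Fin d → ℤ)).2) :=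
          ENNReal.tsum_le_tsum (fun q => hperq q q.2)
    _ = c * ∑' q : D, volume (dyadicCube d ((q:ℕ × (Fin d → ℤ)).1:ℤ) (q:ℕ × (Fin d → ℤ)).2) :=
          ENNReal.tsum_mul_left
    _ = c * volume (⋃ q ∈ D, dyadicCube d (q.1:ℤ) q.2) := by
          rw [measure_biUnion hDcount hpair (fun q _ => dyadicCube_measurable _ _)]
    _ ≤ c * volume O := by
          refine mul_le_mul_right (measure_mono ?_) c
          refine Set.iUnion₂_subset ?_
          rintro ⟨gq, kq⟩ ⟨zq, hzq, hkq, hq1, hq2⟩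
          exact hq1.2
    _ ≤ c * (volume F + ε) := mul_le_mul_right hOvol.le c
  -- conclude
  have hle : volume F ≤ c * volume F := by
    refine ENNReal.le_of_forall_pos_le_add ?_
    intro ε hε hfin
    calc volume F ≤ c * (volume F + ε) := main ε hε
    _ = c * volume F + c * ε := by rw [mul_add]
    _ ≤ c * volume F + 1 * ε := by
          refine add_le_add_right (mul_le_mul_left hc1.le _) _
    _ = c * volume F + ε := by rw [one_mul]
  have hlt : c * volume F < 1 * volume F := by
    refine ENNReal.mul_lt_mul_left hF0 hFfin ?_
    exact hc1
  rw [one_mul] at hlt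
  exact absurd hle (not_le.2 hlt)


/-- The class of points with counting constant `2^{-a}` from generation `J` on. -/
def Wset (d : ℕ) (x : ℕ → Fin d → ℝ) (a J : ℕ) : Set (Fin d → ℝ) :=
  {y | ∀ j₀ j : ℕ, J ≤ j₀ → J ≤ j →
    (2:ℝ)^(d*j) / 2^a ≤ ((MSet x (j₀:ℤ) (cubeIdx (j₀:ℤ) y) j).ncard : ℝ)}

def ENset (d : ℕ) (x : ℕ → Fin d → ℝ) (r : ℕ → ℝ) (N : ℕ) : Set (Fin d → ℝ) :=
  ⋃ n ∈ Set.Ici N, Metric.ball (x n) (r n)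

theorem ENset_open (x : ℕ → Fin d → ℝ) (r : ℕ → ℝ) (N : ℕ) : IsOpen (ENset d x r N) :=
  isOpen_biUnion (fun n _ => Metric.isOpen_ball)

theorem W_null (hd : 1 ≤ d) (x : ℕ → Fin d → ℝ) (r : ℕ → ℝ)
    (hpos : ∀ n, 0 < r n) (hmono : ∀ n, r (n+1) ≤ r n)
    (hdiv : ¬ Summable fun n => r n ^ d) (N a J R : ℕ) :
    volume ((Wset d x a J ∩ Metric.ball 0 R) \ ENset d x r N) = 0 := by
  set F := (Wset d x a J ∩ Metric.ball 0 R) \ ENset d x r N with hF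
  refine cover_null hd J (((2:ℝ)^(a+2*d+3))⁻¹) (by positivity) ?_ (ENset d x r N)
    (ENset_open x r N).measurableSet F ?_ ?_ ?_
  · have h1 : (1:ℝ) ≤ 2^(a+2*d+3) := one_le_pow₀ (by norm_num)
    rw [inv_le_one_iff₀]
    right; exact h1
  · have hb : volume F ≤ volume (Metric.ball (0 : Fin d → ℝ) R) :=
      measure_mono (fun z hz => hz.1.2)
    exact ne_top_of_le_ne_top (ne_of_lt measure_ball_lt_top) hb
  · exact Set.disjoint_sdiff_left
  · intro z hz g hg
    have hzW : z ∈ Wset d x a J := hz.1.1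
    exact key hd x r hpos hmono hdiv N a J g (cubeIdx (g:ℤ) z) (fun j hj => hzW g j hg hj)

theorem U_sub_null (hd : 1 ≤ d) (U : Set (Fin d → ℝ)) (hUopen : IsOpen U)
    (x : ℕ → Fin d → ℝ)
    (h : ∀ᵐ y ∂(volume.restrict U), ∃ α > (0 : ℝ), ∃ J : ℕ, ∀ j₀ j : ℕ, J ≤ j₀ → J ≤ j →
      α * 2 ^ (d * j) ≤ ((MSet x (j₀ : ℤ) (cubeIdx (j₀ : ℤ) y) j).ncard : ℝ)) :
    volume (U \ ⋃ a : ℕ, ⋃ J : ℕ, Wset d x a J) = 0 := by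
  rw [ae_iff] at h
  rw [Measure.restrict_apply' hUopen.measurableSet] at h
  refine measure_mono_null ?_ h
  intro y hy
  refine ⟨?_, hy.1⟩
  simp only [Set.mem_setOf_eq, not_exists, not_and]
  intro α hα J hJ
  refine hy.2 ?_
  obtain ⟨a, ha⟩ := exists_pow_lt_of_lt_one hα (by norm_num : (1:ℝ)/2 < 1)
  refine Set.mem_iUnion.2 ⟨a, Set.mem_iUnion.2 ⟨J, ?_⟩⟩
  intro j₀ j hj₀ hj
  refine le_trans ?_ (hJ j₀ j hj₀ hj)
  have h2 : ((1:ℝ)/2)^a = (2^a)⁻¹ := by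
    rw [div_pow, one_pow, inv_eq_one_div]
  rw [h2] at ha
  have h3 : (0:ℝ) < 2^(d*j) := by positivity
  rw [div_eq_mul_inv]
  calc (2:ℝ)^(d*j) * (2^a)⁻¹ ≤ 2^(d*j) * α := by nlinarith
  _ = α * 2^(d*j) := by ring


end Stmt12

open Stmt12 in
set_option maxHeartbeats 1000000 in
/-- Sufficient condition for uniform eutaxy: if for Lebesgue-almost every `y ∈ U` the
number of cubes in `M((x_n); λ_{j₀}(y), j)` is eventually at least `α·2^{dj}`, uniformly in
large `j₀` and `j`, then the sequence `(x_n)` is uniformly eutaxic in `U`. -/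
theorem stmt12 (d : ℕ) (hd : 1 ≤ d) (U : Set (Fin d → ℝ))
    (hUopen : IsOpen U) (hUne : U.Nonempty) (x : ℕ → Fin d → ℝ)
    (h : ∀ᵐ y ∂(volume.restrict U), ∃ α > (0 : ℝ), ∃ J : ℕ, ∀ j₀ j : ℕ, J ≤ j₀ → J ≤ j →
      α * 2 ^ (d * j) ≤ ((MSet x (j₀ : ℤ) (cubeIdx (j₀ : ℤ) y) j).ncard : ℝ)) :
    UnifEutaxic x U := by
  intro r hr
  obtain ⟨hpos, hmono, htend, hdiv⟩ := hr
  unfold Eutaxic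
  rw [ae_iff, Measure.restrict_apply' hUopen.measurableSet]
  -- the bad set is contained in a countable union of null sets
  have hsub : {y : Fin d → ℝ | ¬ ({n : ℕ | 1 ≤ n ∧ ‖y - x n‖ < r n}).Infinite} ∩ U ⊆
      (U \ ⋃ a : ℕ, ⋃ J : ℕ, Wset d x a J) ∪
      ⋃ N : ℕ, ⋃ a : ℕ, ⋃ J : ℕ, ⋃ R : ℕ,
        ((Wset d x a J ∩ Metric.ball 0 R) \ ENset d x r N) := by
    rintro y ⟨hybad, hyU⟩
    rw [Set.mem_setOf_eq, Set.not_infinite] at hybad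
    -- y avoids all balls beyond some index
    obtain ⟨N, hN⟩ := hybad.bddAbove
    have hyE : y ∉ ENset d x r (N+1) := by
      intro hyE
      obtain ⟨n, hn, hyn⟩ := Set.mem_iUnion₂.1 hyE
      have hn2 : N + 1 ≤ n := hn
      have hn' : n ∈ {n : ℕ | 1 ≤ n ∧ ‖y - x n‖ < r n} := by
        refine ⟨by omega, ?_⟩
        rwa [mem_ball_iff_norm] at hyn
      have hn3 := hN hn'
      omega
    by_cases hyW : y ∈ ⋃ a : ℕ, ⋃ J : ℕ, Wset d x a J
    · obtain ⟨a, ha⟩ := Set.mem_iUnion.1 hyW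
      obtain ⟨J, hJ⟩ := Set.mem_iUnion.1 ha
      obtain ⟨R, hR⟩ := exists_nat_gt ‖y‖
      refine Set.mem_union_right _ ?_
      refine Set.mem_iUnion.2 ⟨N+1, Set.mem_iUnion.2 ⟨a, Set.mem_iUnion.2 ⟨J,
        Set.mem_iUnion.2 ⟨R, ?_⟩⟩⟩⟩
      refine ⟨⟨hJ, ?_⟩, hyE⟩
      rw [Metric.mem_ball, dist_zero_right]
      exact hR
    · exact Set.mem_union_left _ ⟨hyU, hyW⟩
  refine measure_mono_null hsub ?_
  refine measure_union_null (U_sub_null hd U hUopen x h) ?_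
  refine measure_iUnion_null fun N => measure_iUnion_null fun a =>
    measure_iUnion_null fun J => measure_iUnion_null fun R => ?_
  exact W_null hd x r hpos hmono hdiv N a J R
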